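/- Output distribution of the Parity Halving circuit on a poor man's cat state: fix n ≥ 1, x : Fin n → Bool of even Hamming weight |x|, and z : Fin n → Bool with complement z̄. Let ⟨z,x⟩ denote the number of i with z_i = x_i = true, and define ψ : (Fin n → Bool) → ℂ by ψ(z) = i^{⟨z,x⟩}/√2, ψ(z̄) = i^{⟨z̄,x⟩}/√2, and ψ(v) = 0 for all other v (i denotes the imaginary unit). Let H_n be the n-qubit Hadamard transform, (H_n ψ)(y) = 2^{−n/2}·∑_{v : Fin n → Bool} (−1)^{⟨v,y⟩}·ψ(v), where ⟨v,y⟩ counts the i with v_i = y_i = true. Then for every y : Fin n → Bool, |(H_n ψ)(y)|² equals 2^{−(n−1)} if |y| ≡ |x|/2 + ⟨z,x⟩ (mod 2), and equals 0 otherwise. -/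

import Mathlib

/-- Hamming weight of a Boolean string. -/
def hamming {n : ℕ} (x : Fin n → Bool) : ℕ :=
  (Finset.univ.filter fun i => x i = true).card

/-- `inn u v` is the number of indices `i` with `u i = v i = true`. -/
def inn {n : ℕ} (u v : Fin n → Bool) : ℕ :=
  (Finset.univ.filter fun i => u i = true ∧ v i = true).card

/-- The state obtained by applying the controlled-phase layer of the Parity Halving
circuit (for input `x`) to the poor man's cat state `(|z⟩ + |z̄⟩)/√2`:
amplitude `i^{⟨z,x⟩}/√2` on `z`, `i^{⟨z̄,x⟩}/√2` on `z̄`, and `0` elsewhere. -/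
noncomputable def phpState (n : ℕ) (x z : Fin n → Bool) : (Fin n → Bool) → ℂ :=
  fun v =>
    if v = z then Complex.I ^ inn z x / (Real.sqrt 2 : ℂ)
    else if v = (fun i => !(z i)) then
      Complex.I ^ inn (fun i => !(z i)) x / (Real.sqrt 2 : ℂ)
    else 0

/-- The `n`-qubit Hadamard transform: `(H_n ψ)(y) = 2^{−n/2} ∑_v (−1)^{⟨v,y⟩} ψ(v)`. -/
noncomputable def hadamardTransform (n : ℕ) (ψ : (Fin n → Bool) → ℂ)
    (y : Fin n → Bool) : ℂ :=
  ((Real.sqrt 2 : ℂ) ^ n)⁻¹ * ∑ v, (-1 : ℂ) ^ inn v y * ψ v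

/-!
Only `z` and `z̄` carry amplitude, so `(H_n ψ)(y)` is `2^{-n/2}/√2` times
`(-1)^⟨z,y⟩ i^⟨z,x⟩ + (-1)^⟨z̄,y⟩ i^⟨z̄,x⟩`. Since `⟨z,y⟩ + ⟨z̄,y⟩ = |y|` and
`⟨z,x⟩ + ⟨z̄,x⟩ = |x| = 2m`, the second term is `(-1)^(|y| + m + ⟨z,x⟩)` times the first, so the
two amplitudes interfere constructively or destructively according to that parity.
-/

open Complex

section

variable {n : ℕ}

lemma inn_add_inn_not (u v : Fin n → Bool) :
    inn u v + inn (fun i => !u i) v = hamming v := by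
  rw [inn, inn, hamming, ← Finset.card_union_of_disjoint]
  · congr 1
    ext i
    simp only [Finset.mem_union, Finset.mem_filter, Finset.mem_univ, true_and]
    cases u i <;> simp
  · exact Finset.disjoint_filter.2 fun i _ h => by simp [h.1]

lemma self_ne_not (hn : 1 ≤ n) (z : Fin n → Bool) : z ≠ fun i => !z i :=
  fun h => by simpa using congrFun h ⟨0, hn⟩

lemma neg_one_pow_eq_of_add_eq {R : Type*} [Monoid R] [HasDistribNeg R] {a b s : ℕ}
    (h : a + b = s) : (-1 : R) ^ b = (-1) ^ (s + a) := by
  rw [← h, add_right_comm, ← two_mul, pow_add, pow_mul, neg_one_sq, one_pow, one_mul]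

lemma I_pow_eq_of_add_eq {c d m : ℕ} (h : c + d = 2 * m) :
    I ^ d = (-1) ^ (m + c) * I ^ c := by
  apply mul_left_cancel₀ (pow_ne_zero c I_ne_zero)
  have hc : (-1 : ℂ) ^ c = I ^ c * I ^ c := by rw [← mul_pow, I_mul_I]
  calc I ^ c * I ^ d = (-1) ^ m := by rw [← pow_add, h, pow_mul, I_sq]
    _ = (-1) ^ (m + c) * (-1) ^ c := by
      rw [← pow_add, add_assoc, ← two_mul, pow_add, pow_mul, neg_one_sq, one_pow, mul_one]
    _ = I ^ c * ((-1) ^ (m + c) * I ^ c) := by rw [hc]; ring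

lemma norm_sq_add_neg_one_pow_mul_self (u : ℂ) (k : ℕ) :
    ‖u + (-1) ^ k * u‖ ^ 2 = if Even k then 4 * ‖u‖ ^ 2 else 0 := by
  rcases Nat.even_or_odd k with hk | hk
  · rw [if_pos hk, hk.neg_one_pow, one_mul, ← two_mul, norm_mul]
    norm_num
    ring
  · rw [if_neg (Nat.not_even_iff_odd.2 hk), hk.neg_one_pow]; simp

lemma hadamardTransform_phpState (hn : 1 ≤ n) (x z y : Fin n → Bool) :
    hadamardTransform n (phpState n x z) y =
      ((Real.sqrt 2 : ℂ) ^ n)⁻¹ * ((-1) ^ inn z y * (I ^ inn z x / Real.sqrt 2) +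
        (-1) ^ inn (fun i => !z i) y * (I ^ inn (fun i => !z i) x / Real.sqrt 2)) := by
  have hz := self_ne_not hn z
  rw [hadamardTransform, Fintype.sum_eq_add z _ hz fun v hv => by simp [phpState, hv.1, hv.2]]
  simp [phpState, hz.symm]

end

/-- Output distribution of the Parity Halving circuit on a poor man's cat state:
each `y` with `|y| ≡ |x|/2 + ⟨z,x⟩ (mod 2)` occurs with probability `2^{−(n−1)}`, and
all other `y` occur with probability `0`. -/
theorem php_circuit_on_poor_mans_cat (n : ℕ) (hn : 1 ≤ n) (x z : Fin n → Bool)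
    (hx : Even (hamming x)) (y : Fin n → Bool) :
    ‖hadamardTransform n (phpState n x z) y‖ ^ 2 =
      if hamming y % 2 = (hamming x / 2 + inn z x) % 2
      then ((2 : ℝ) ^ (n - 1))⁻¹ else 0 := by
  obtain ⟨m, hm⟩ := hx
  have hy := inn_add_inn_not z y
  have hx' : inn z x + inn (fun i => !z i) x = 2 * m := by rw [inn_add_inn_not, hm, two_mul]
  set u : ℂ := ((Real.sqrt 2 : ℂ) ^ n)⁻¹ * ((-1) ^ inn z y * (I ^ inn z x / Real.sqrt 2))
  have hsum : hadamardTransform n (phpState n x z) y =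
      u + (-1) ^ (hamming y + m + inn z x) * u := by
    rw [hadamardTransform_phpState hn, neg_one_pow_eq_of_add_eq hy, I_pow_eq_of_add_eq hx']
    ring
  have hu : 4 * ‖u‖ ^ 2 = ((2 : ℝ) ^ (n - 1))⁻¹ := by
    obtain ⟨k, rfl⟩ := Nat.exists_eq_add_of_le' hn
    have h2 : ‖(Real.sqrt 2 : ℂ)‖ ^ 2 = 2 := by simp
    simp only [u, norm_mul, norm_inv, norm_pow, norm_div, norm_neg, norm_one, norm_I, one_pow,
      one_mul, mul_pow, inv_pow, div_pow, ← pow_mul, pow_mul', h2, Nat.add_sub_cancel]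
    field_simp
    ring
  have hparity : Even (hamming y + m + inn z x) ↔
      hamming y % 2 = (hamming x / 2 + inn z x) % 2 := by
    rw [Nat.even_iff]; omega
  rw [hsum, norm_sq_add_neg_one_pow_mul_self, hu]
  exact if_congr hparity rfl rfl
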